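/- arXiv:1510.08175 — 2 statements merged into one kernel-verified Lean document; each statement's English description precedes it below -/
import Mathlib

section
/- (Easy case of Theorem 1, Rendl–Wolkowicz) Suppose a is not orthogonal to the eigenspace of λmin(A) (the easy case). Then for every t ∈ ℝ, λmin(D(t)) < λmin(A) and λmin(D(t)) is a simple eigenvalue of D(t) (its eigenspace is one-dimensional). -/
/-!
Write `D = D(t)`, `λ = λmin(A)`, and let `v` be a `λ`-eigenvector of `A` with `⟨a, v⟩ ≠ 0`.
On the test vector `(s, v)` the quadratic form of `D - λ` equals `(t - λ) s² - 2 s ⟨a, v⟩`,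
which is negative for a suitable small `s`; since `λmin(D)` is the minimum of the Rayleigh
quotient, `λmin(D) < λ`. An eigenvector of `D` for `λmin(D)` whose first coordinate vanishes
would be an eigenvector of `A` for an eigenvalue below `λ`, hence is zero; so the first
coordinate is injective on the eigenspace of `λmin(D)`, which is therefore a line.
-/

open Matrix

/-- The smallest eigenvalue of a real (symmetric) matrix. -/
noncomputable def lambdaMin {ι : Type} [Fintype ι] (M : Matrix ι ι ℝ) : ℝ :=
  sInf {μ : ℝ | ∃ v : ι → ℝ, v ≠ 0 ∧ M.mulVec v = μ • v}

/-- The multiplicity of the smallest eigenvalue: the dimension of Null(M - λmin(M)·I). -/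
noncomputable def eigMult {ι : Type} [Fintype ι] [DecidableEq ι] (M : Matrix ι ι ℝ) : ℕ :=
  Module.finrank ℝ (LinearMap.ker (M - lambdaMin M • (1 : Matrix ι ι ℝ)).mulVecLin)

/-- The bordered matrix D(t) = [[t, -aᵀ],[-a, A]]. -/
noncomputable def borderD {n : ℕ} (A : Matrix (Fin n) (Fin n) ℝ) (a : Fin n → ℝ) (t : ℝ) :
    Matrix (Unit ⊕ Fin n) (Unit ⊕ Fin n) ℝ :=
  Matrix.fromBlocks (Matrix.of fun (_ : Unit) (_ : Unit) => t)
    (Matrix.of fun (_ : Unit) (j : Fin n) => -a j)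
    (Matrix.of fun (i : Fin n) (_ : Unit) => -a i) A

/-- The bordered matrix D(t,λ) = [[t, (-a + (λ/2)b)ᵀ],[-a + (λ/2)b, A]]. -/
noncomputable def borderD2 {n : ℕ} (A : Matrix (Fin n) (Fin n) ℝ) (a b : Fin n → ℝ)
    (t l : ℝ) : Matrix (Unit ⊕ Fin n) (Unit ⊕ Fin n) ℝ :=
  borderD A (fun j => a j - (l / 2) * b j) t

/-- The objective xᵀAx - 2aᵀx. -/
noncomputable def objQ {n : ℕ} (A : Matrix (Fin n) (Fin n) ℝ) (a : Fin n → ℝ)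
    (x : Fin n → ℝ) : ℝ :=
  x ⬝ᵥ A.mulVec x - 2 * (a ⬝ᵥ x)

/-- The optimal value p* of eTRS. -/
noncomputable def pstar {n : ℕ} (A : Matrix (Fin n) (Fin n) ℝ) (a b : Fin n → ℝ)
    (c Δ : ℝ) : ℝ :=
  sInf {v : ℝ | ∃ x : Fin n → ℝ, x ⬝ᵥ x ≤ Δ ∧ b ⬝ᵥ x ≤ c ∧ v = objQ A a x}

/-- The Lagrangian of eTRS. -/
noncomputable def lagr {n : ℕ} (A : Matrix (Fin n) (Fin n) ℝ) (a b : Fin n → ℝ)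
    (c Δ : ℝ) (x : Fin n → ℝ) (l1 l2 : ℝ) : ℝ :=
  objQ A a x + l1 * (x ⬝ᵥ x - Δ) + l2 * (b ⬝ᵥ x - c)

/-- The Lagrangian dual value d* of eTRS:
the supremum over λ1, λ2 ≥ 0 of inf_x of the Lagrangian, encoded as the supremum of all
values that are lower bounds of the Lagrangian for some admissible multipliers. -/
noncomputable def dstar {n : ℕ} (A : Matrix (Fin n) (Fin n) ℝ) (a b : Fin n → ℝ)
    (c Δ : ℝ) : ℝ :=
  sSup {v : ℝ | ∃ l1 l2 : ℝ, 0 ≤ l1 ∧ 0 ≤ l2 ∧ ∀ x : Fin n → ℝ, v ≤ lagr A a b c Δ x l1 l2}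

/-- x is a global optimal solution of eTRS. -/
def isOptimal {n : ℕ} (A : Matrix (Fin n) (Fin n) ℝ) (a b : Fin n → ℝ)
    (c Δ : ℝ) (x : Fin n → ℝ) : Prop :=
  x ⬝ᵥ x ≤ Δ ∧ b ⬝ᵥ x ≤ c ∧
    ∀ y : Fin n → ℝ, y ⬝ᵥ y ≤ Δ → b ⬝ᵥ y ≤ c → objQ A a x ≤ objQ A a y

/-- The dual objective k(t,λ) = (Δ+1)·λmin(D(t,λ)) - t - λc. -/
noncomputable def ktl {n : ℕ} (A : Matrix (Fin n) (Fin n) ℝ) (a b : Fin n → ℝ)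
    (c Δ : ℝ) (t l : ℝ) : ℝ :=
  (Δ + 1) * lambdaMin (borderD2 A a b t l) - t - l * c

theorem exists_mul_sq_sub_two_mul_neg (c : ℝ) {b : ℝ} (hb : b ≠ 0) :
    ∃ s : ℝ, c * s ^ 2 - 2 * s * b < 0 := by
  refine ⟨b / (|c| + 1), ?_⟩
  have hc : c - 2 * (|c| + 1) < 0 := by linarith [le_abs_self c, abs_nonneg c]
  have hfactor : c * (b / (|c| + 1)) ^ 2 - 2 * (b / (|c| + 1)) * b
      = (b / (|c| + 1)) ^ 2 * (c - 2 * (|c| + 1)) := by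
    field_simp
  rw [hfactor]
  exact mul_neg_of_pos_of_neg (by positivity) hc

section Spectrum

variable {ι : Type} [Fintype ι] [DecidableEq ι] {M : Matrix ι ι ℝ}

theorem setOf_mulVec_eq_smul_eq_spectrum (M : Matrix ι ι ℝ) :
    {μ : ℝ | ∃ v : ι → ℝ, v ≠ 0 ∧ M *ᵥ v = μ • v} = spectrum ℝ M := by
  ext μ
  rw [Set.mem_ofPred_eq, ← Matrix.spectrum_toLin', ← Module.End.hasEigenvalue_iff_mem_spectrum]
  constructor
  · rintro ⟨v, hv, h⟩
    exact Module.End.hasEigenvalue_of_hasEigenvector ⟨Module.End.mem_eigenspace_iff.mpr h, hv⟩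
  · intro h
    obtain ⟨v, hv⟩ := h.exists_hasEigenvector
    exact ⟨v, hv.2, hv.apply_eq_smul⟩

theorem lambdaMin_eq_sInf_spectrum (M : Matrix ι ι ℝ) : lambdaMin M = sInf (spectrum ℝ M) :=
  congrArg sInf (setOf_mulVec_eq_smul_eq_spectrum M)

theorem lambdaMin_le_of_mem_spectrum {μ : ℝ} (h : μ ∈ spectrum ℝ M) : lambdaMin M ≤ μ :=
  lambdaMin_eq_sInf_spectrum M ▸ csInf_le M.finite_real_spectrum.bddBelow h

theorem eq_zero_of_mulVec_eq_smul_of_lt_lambdaMin {μ : ℝ} (hμ : μ < lambdaMin M) {v : ι → ℝ}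
    (hv : M *ᵥ v = μ • v) : v = 0 := by
  by_contra h
  have hmem : μ ∈ spectrum ℝ M := setOf_mulVec_eq_smul_eq_spectrum M ▸ ⟨v, h, hv⟩
  exact (lambdaMin_le_of_mem_spectrum hmem).not_gt hμ

theorem Matrix.IsHermitian.lambdaMin_mem_spectrum [Nonempty ι] (hM : M.IsHermitian) :
    lambdaMin M ∈ spectrum ℝ M := by
  rw [lambdaMin_eq_sInf_spectrum]
  refine Set.Nonempty.csInf_mem ?_ M.finite_real_spectrum
  rw [hM.spectrum_real_eq_range_eigenvalues]
  exact Set.range_nonempty _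

open scoped MatrixOrder in
theorem Matrix.IsHermitian.lambdaMin_mul_dotProduct_self_le (hM : M.IsHermitian) (x : ι → ℝ) :
    lambdaMin M * (x ⬝ᵥ x) ≤ x ⬝ᵥ M *ᵥ x := by
  have hle : algebraMap ℝ (Matrix ι ι ℝ) (lambdaMin M) ≤ M :=
    (algebraMap_le_iff_le_spectrum hM.isSelfAdjoint).2 fun _ => lambdaMin_le_of_mem_spectrum
  have := (Matrix.le_iff.1 hle).dotProduct_mulVec_nonneg x
  simpa [sub_mulVec, Algebra.algebraMap_eq_smul_one, smul_mulVec, dotProduct_smul] using this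

theorem mem_ker_sub_lambdaMin_smul_one_iff {x : ι → ℝ} :
    x ∈ LinearMap.ker (M - lambdaMin M • (1 : Matrix ι ι ℝ)).mulVecLin ↔
      M *ᵥ x = lambdaMin M • x := by
  rw [LinearMap.mem_ker, mulVecLin_apply, sub_mulVec, smul_mulVec, one_mulVec, sub_eq_zero]

theorem Matrix.IsHermitian.eigMult_eq_one [Nonempty ι] (hM : M.IsHermitian) (i : ι)
    (h : ∀ x : ι → ℝ, M *ᵥ x = lambdaMin M • x → x i = 0 → x = 0) : eigMult M = 1 := by
  set K := LinearMap.ker (M - lambdaMin M • (1 : Matrix ι ι ℝ)).mulVecLin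
  have hinj : Function.Injective ((LinearMap.proj i : (ι → ℝ) →ₗ[ℝ] ℝ).comp K.subtype) := by
    rw [← LinearMap.ker_eq_bot, LinearMap.ker_eq_bot']
    intro x hx
    exact Subtype.ext (h x (mem_ker_sub_lambdaMin_smul_one_iff.1 x.2) hx)
  have hle : eigMult M ≤ 1 := by
    simpa [eigMult, K] using LinearMap.finrank_le_finrank_of_injective hinj
  obtain ⟨v, hv, hMv⟩ := (setOf_mulVec_eq_smul_eq_spectrum M).symm ▸ hM.lambdaMin_mem_spectrum
  have hpos : 0 < eigMult M :=
    Module.finrank_pos_iff_exists_ne_zero.2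
      ⟨⟨v, mem_ker_sub_lambdaMin_smul_one_iff.2 hMv⟩, by simpa using hv⟩
  omega

end Spectrum

section Border

variable {n : ℕ} (A : Matrix (Fin n) (Fin n) ℝ) (a : Fin n → ℝ) (t : ℝ)

theorem borderD_isHermitian (hA : A.IsHermitian) : (borderD A a t).IsHermitian := by
  refine Matrix.IsHermitian.fromBlocks ?_ ?_ hA
  · ext; simp
  · ext; simp

theorem borderD_mulVec (x : Unit ⊕ Fin n → ℝ) :
    borderD A a t *ᵥ x = Sum.elim (fun _ => t * x (Sum.inl ()) - a ⬝ᵥ (x ∘ Sum.inr))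
      (A *ᵥ (x ∘ Sum.inr) - x (Sum.inl ()) • a) := by
  ext (_ | i) <;> simp [borderD, mulVec, dotProduct] <;> ring

theorem dotProduct_borderD_mulVec (s : ℝ) (y : Fin n → ℝ) :
    Sum.elim (fun _ => s) y ⬝ᵥ borderD A a t *ᵥ Sum.elim (fun _ => s) y
      = t * s ^ 2 - 2 * s * (a ⬝ᵥ y) + y ⬝ᵥ A *ᵥ y := by
  rw [borderD_mulVec, Sum.elim_inl, Sum.elim_comp_inr, sumElim_dotProduct_sumElim,
    dotProduct_sub, dotProduct_smul, dotProduct_comm y a]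
  simp only [dotProduct, Fintype.sum_unique, smul_eq_mul]
  ring

theorem borderD_eq_zero_of_mulVec_eq_smul_of_inl_eq_zero {μ : ℝ} (hμ : μ < lambdaMin A)
    {x : Unit ⊕ Fin n → ℝ} (hx : borderD A a t *ᵥ x = μ • x) (h0 : x (Sum.inl ()) = 0) :
    x = 0 := by
  have hA : A *ᵥ (x ∘ Sum.inr) = μ • (x ∘ Sum.inr) := by
    ext i
    simpa [borderD_mulVec, h0] using congrFun hx (Sum.inr i)
  have hinr := eq_zero_of_mulVec_eq_smul_of_lt_lambdaMin hμ hA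
  ext (_ | i)
  · exact h0
  · exact congrFun hinr i

theorem lambdaMin_borderD_lt (hA : A.IsHermitian) {v : Fin n → ℝ}
    (hv : A *ᵥ v = lambdaMin A • v) (hav : a ⬝ᵥ v ≠ 0) :
    lambdaMin (borderD A a t) < lambdaMin A := by
  obtain ⟨s, hs⟩ := exists_mul_sq_sub_two_mul_neg (t - lambdaMin A) hav
  set x : Unit ⊕ Fin n → ℝ := Sum.elim (fun _ => s) v
  have hxx : x ⬝ᵥ x = s ^ 2 + v ⬝ᵥ v := by
    rw [sumElim_dotProduct_sumElim]; simp only [dotProduct, Fintype.sum_unique, sq]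
  have hquad : x ⬝ᵥ borderD A a t *ᵥ x
      = lambdaMin A * (x ⬝ᵥ x) + ((t - lambdaMin A) * s ^ 2 - 2 * s * (a ⬝ᵥ v)) := by
    rw [dotProduct_borderD_mulVec, hv, dotProduct_smul, smul_eq_mul, hxx]
    ring
  have hray := (borderD_isHermitian A a t hA).lambdaMin_mul_dotProduct_self_le x
  have hxx_nonneg : 0 ≤ x ⬝ᵥ x := by
    rw [hxx]; exact add_nonneg (sq_nonneg s) (dotProduct_self_star_nonneg v)
  by_contra! hge
  linarith [mul_le_mul_of_nonneg_right hge hxx_nonneg]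

theorem eigMult_borderD_eq_one (hA : A.IsHermitian)
    (hlt : lambdaMin (borderD A a t) < lambdaMin A) : eigMult (borderD A a t) = 1 :=
  (borderD_isHermitian A a t hA).eigMult_eq_one (Sum.inl ()) fun _ hx h0 =>
    borderD_eq_zero_of_mulVec_eq_smul_of_inl_eq_zero A a t hlt hx h0

end Border

theorem stmt0_general {n : ℕ} (A : Matrix (Fin n) (Fin n) ℝ) (hA : A.IsHermitian)
    (a : Fin n → ℝ)
    (heasy : ∃ v : Fin n → ℝ, A.mulVec v = lambdaMin A • v ∧ a ⬝ᵥ v ≠ 0) :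
    ∀ t : ℝ, lambdaMin (borderD A a t) < lambdaMin A ∧ eigMult (borderD A a t) = 1 := by
  intro t
  obtain ⟨v, hv, hav⟩ := heasy
  have hlt := lambdaMin_borderD_lt A a t hA hv hav
  exact ⟨hlt, eigMult_borderD_eq_one A a t hA hlt⟩

/-- Easy case of Theorem 1 (Rendl–Wolkowicz). -/
theorem stmt0 {n : ℕ} (hn : 1 ≤ n) (A : Matrix (Fin n) (Fin n) ℝ) (hA : A.IsHermitian)
    (a : Fin n → ℝ) (Δ : ℝ) (hΔ : 0 < Δ)
    (heasy : ∃ v : Fin n → ℝ, A.mulVec v = lambdaMin A • v ∧ a ⬝ᵥ v ≠ 0) :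
    ∀ t : ℝ, lambdaMin (borderD A a t) < lambdaMin A ∧ eigMult (borderD A a t) = 1 :=
  stmt0_general A hA a heasy
end

section
/- (Hard case of Theorem 1, Rendl–Wolkowicz) Suppose a is orthogonal to the eigenspace of λmin(A) (the hard case), let i be the multiplicity of λmin(A), and set t0 := λmin(A) + aᵀ(A − λmin(A)·I)† a, where † is the Moore–Penrose pseudoinverse. Then: for t < t0, λmin(D(t)) < λmin(A) and λmin(D(t)) is a simple eigenvalue; for t = t0, λmin(D(t)) = λmin(A) and has multiplicity i + 1; and for t > t0, λmin(D(t)) = λmin(A) and has multiplicity i. -/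
/-!
Let λ = λmin(A) and t0 = λ + aᵀw, and write vectors of the bordered space as (s, x).
Since a = (A − λ)w is orthogonal to Null(A − λ), every (0, v) with v ∈ Null(A − λ) is a
λ-eigenvector of D(t), so λmin(D(t)) ≤ λ; and (D(t) − λ)(1, w) = (t − t0, 0), so the Rayleigh
quotient of (1, w) shows λmin(D(t)) < λ when t < t0. Conversely, an eigenvector (s, x) of D(t)
with eigenvalue μ < λ has s ≠ 0, and y = x/s solves (A − μ)y = a with t = μ + aᵀy; positive
semidefiniteness of A − λ gives aᵀy ≤ aᵀw, hence t < t0. Below λ an eigenvector is determined by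
its first coordinate, so λmin(D(t)) is simple. At λ, the shear (s, x) ↦ (s, x − s w) maps the
eigenspace of D(t) onto {s | s (t − t0) = 0} × Null(A − λ).
-/

open Matrix

theorem Submodule.finrank_prod {K M N : Type*} [DivisionRing K] [AddCommGroup M] [Module K M]
    [AddCommGroup N] [Module K N] [FiniteDimensional K M] [FiniteDimensional K N]
    (p : Submodule K M) (q : Submodule K N) :
    Module.finrank K (p.prod q) = Module.finrank K p + Module.finrank K q := by
  rw [← Module.finrank_prod]
  exact LinearEquiv.finrank_eq
    { AddSubmonoid.prodEquiv p.toAddSubmonoid q.toAddSubmonoid with map_smul' := fun _ _ => rfl }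

namespace Matrix

lemma IsHermitian.mulVec_dotProduct {ι : Type} [Fintype ι] {M : Matrix ι ι ℝ}
    (hM : M.IsHermitian) (x y : ι → ℝ) : (M *ᵥ x) ⬝ᵥ y = x ⬝ᵥ (M *ᵥ y) := by
  rw [dotProduct_mulVec, ← mulVec_transpose, ← conjTranspose_eq_transpose_of_trivial, hM.eq]

section LambdaMin

variable {ι : Type} [Fintype ι] [DecidableEq ι] {M : Matrix ι ι ℝ}

lemma mem_ker_sub_smul_one_iff {μ : ℝ} {v : ι → ℝ} :
    v ∈ LinearMap.ker (M - μ • (1 : Matrix ι ι ℝ)).mulVecLin ↔ M *ᵥ v = μ • v := by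
  rw [LinearMap.mem_ker, mulVecLin_apply, sub_mulVec, smul_mulVec, one_mulVec, sub_eq_zero]

lemma setOf_mulVec_eq_smul_eq_spectrum (M : Matrix ι ι ℝ) :
    {μ : ℝ | ∃ v : ι → ℝ, v ≠ 0 ∧ M *ᵥ v = μ • v} = spectrum ℝ M := by
  ext μ
  rw [← spectrum_toLin', ← Module.End.hasEigenvalue_iff_mem_spectrum]
  constructor
  · rintro ⟨v, hv, hMv⟩
    exact Module.End.hasEigenvalue_of_hasEigenvector
      ⟨by simpa [Module.End.mem_eigenspace_iff] using hMv, hv⟩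
  · intro h
    obtain ⟨v, hv, hv0⟩ := h.exists_hasEigenvector
    exact ⟨v, hv0, by simpa [Module.End.mem_eigenspace_iff] using hv⟩

lemma lambdaMin_eq_sInf_spectrum (M : Matrix ι ι ℝ) : lambdaMin M = sInf (spectrum ℝ M) := by
  rw [lambdaMin, setOf_mulVec_eq_smul_eq_spectrum]

lemma lambdaMin_le_of_mulVec_eq_smul {μ : ℝ} {v : ι → ℝ} (hv : v ≠ 0) (hMv : M *ᵥ v = μ • v) :
    lambdaMin M ≤ μ := by
  rw [lambdaMin_eq_sInf_spectrum]
  refine csInf_le M.finite_real_spectrum.bddBelow ?_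
  rw [← setOf_mulVec_eq_smul_eq_spectrum]
  exact ⟨v, hv, hMv⟩

namespace IsHermitian

variable (hM : M.IsHermitian)
include hM

lemma exists_mulVec_eq_lambdaMin_smul [Nonempty ι] :
    ∃ v : ι → ℝ, v ≠ 0 ∧ M *ᵥ v = lambdaMin M • v := by
  have h : lambdaMin M ∈ spectrum ℝ M := by
    rw [lambdaMin_eq_sInf_spectrum, hM.spectrum_real_eq_range_eigenvalues]
    exact (Set.range_nonempty _).csInf_mem (Set.finite_range _)
  rwa [← setOf_mulVec_eq_smul_eq_spectrum] at h

lemma one_le_eigMult [Nonempty ι] : 1 ≤ eigMult M := by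
  obtain ⟨v, hv, hMv⟩ := hM.exists_mulVec_eq_lambdaMin_smul
  exact Submodule.one_le_finrank_iff.mpr fun h =>
    hv ((Submodule.eq_bot_iff _).mp h v (mem_ker_sub_smul_one_iff.mpr hMv))

lemma lambdaMin_le_eigenvalues (i : ι) : lambdaMin M ≤ hM.eigenvalues i := by
  rw [lambdaMin_eq_sInf_spectrum, hM.spectrum_real_eq_range_eigenvalues]
  exact csInf_le (Set.finite_range _).bddBelow ⟨i, rfl⟩

lemma posSemidef_sub_smul_one {c : ℝ} (hc : ∀ i, c ≤ hM.eigenvalues i) :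
    (M - c • (1 : Matrix ι ι ℝ)).PosSemidef := by
  set U : Matrix ι ι ℝ := (hM.eigenvectorUnitary : Matrix ι ι ℝ)
  have hMU : M = U * diagonal hM.eigenvalues * star U := by
    simpa [Unitary.conjStarAlgAut_apply] using hM.spectral_theorem
  have hUU : U * star U = 1 := Unitary.mul_star_self_of_mem hM.eigenvectorUnitary.2
  have hdiag : diagonal hM.eigenvalues - c • 1 = diagonal (fun i => hM.eigenvalues i - c) := by
    ext i j
    by_cases h : i = j <;> simp [diagonal, h]
  have hshift : M - c • 1 = U * diagonal (fun i => hM.eigenvalues i - c) * star U := by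
    rw [← hdiag, Matrix.mul_sub, Matrix.sub_mul, ← hMU, Matrix.mul_smul, mul_one,
      Matrix.smul_mul, hUU]
  rw [hshift]
  exact (PosSemidef.diagonal fun i => sub_nonneg.mpr (hc i)).mul_mul_conjTranspose_same U

lemma lambdaMin_lt_of_dotProduct_sub_smul_one_neg {c : ℝ} {x : ι → ℝ}
    (hx : x ⬝ᵥ ((M - c • (1 : Matrix ι ι ℝ)) *ᵥ x) < 0) : lambdaMin M < c := by
  by_contra! hc
  have hpsd := hM.posSemidef_sub_smul_one fun i => hc.trans (hM.lambdaMin_le_eigenvalues i)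
  simpa using (hpsd.dotProduct_mulVec_nonneg x).trans_lt hx

end IsHermitian

end LambdaMin

lemma PosSemidef.dotProduct_le_of_mulVec_add_smul_eq {ι : Type} [Fintype ι]
    {P : Matrix ι ι ℝ} (hP : P.PosSemidef) {δ : ℝ} (hδ : 0 ≤ δ) {a y w : ι → ℝ}
    (hy : P *ᵥ y + δ • y = a) (hw : P *ᵥ w = a) : a ⬝ᵥ y ≤ a ⬝ᵥ w := by
  have hay : a ⬝ᵥ y = a ⬝ᵥ w - δ * (w ⬝ᵥ y) := by
    rw [← hw, hP.isHermitian.mulVec_dotProduct, eq_sub_of_add_eq hy, dotProduct_sub,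
      dotProduct_smul, smul_eq_mul, hw, dotProduct_comm]
  have hquad : 0 ≤ δ * (w ⬝ᵥ y - y ⬝ᵥ y) := by
    have hPwy : P *ᵥ (w - y) = δ • y := by rw [mulVec_sub, hw, ← hy, add_sub_cancel_left]
    simpa [hPwy, sub_dotProduct] using hP.dotProduct_mulVec_nonneg (w - y)
  have hyy : 0 ≤ y ⬝ᵥ y := by simpa using dotProduct_star_self_nonneg y
  nlinarith [mul_nonneg hδ hyy]

section Border

variable {n : ℕ} (A : Matrix (Fin n) (Fin n) ℝ) (a : Fin n → ℝ) (t : ℝ)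

lemma borderD_mulVec (V : Unit ⊕ Fin n → ℝ) :
    borderD A a t *ᵥ V = Sum.elim (fun _ => t * V (Sum.inl ()) - a ⬝ᵥ (V ∘ Sum.inr))
      (A *ᵥ (V ∘ Sum.inr) - V (Sum.inl ()) • a) := by
  rw [borderD, fromBlocks_mulVec]
  congr 1 <;> ext <;> simp [mulVec, dotProduct, sub_eq_add_neg, mul_comm, add_comm]

lemma borderD_mulVec_eq_smul_iff (μ : ℝ) (V : Unit ⊕ Fin n → ℝ) :
    borderD A a t *ᵥ V = μ • V ↔
      t * V (Sum.inl ()) - a ⬝ᵥ (V ∘ Sum.inr) = μ * V (Sum.inl ()) ∧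
        (A - μ • (1 : Matrix (Fin n) (Fin n) ℝ)) *ᵥ (V ∘ Sum.inr) = V (Sum.inl ()) • a := by
  rw [borderD_mulVec, ← Sum.elim_comp_inl_inr (μ • V), Sum.elim_eq_iff, funext_iff,
    Unique.forall_iff, sub_mulVec, smul_mulVec, one_mulVec]
  refine and_congr Iff.rfl ?_
  rw [sub_eq_iff_eq_add, sub_eq_iff_eq_add, add_comm]
  rfl

lemma isHermitian_borderD (hA : A.IsHermitian) : (borderD A a t).IsHermitian := by
  rw [borderD, isHermitian_fromBlocks_iff]
  refine ⟨?_, ?_, ?_, hA⟩ <;> ext <;> simp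

lemma finrank_ker_borderD_sub_smul_one_le_one {μ : ℝ}
    (hμ : ∀ x : Fin n → ℝ, A *ᵥ x = μ • x → x = 0) :
    Module.finrank ℝ (LinearMap.ker
      (borderD A a t - μ • (1 : Matrix (Unit ⊕ Fin n) (Unit ⊕ Fin n) ℝ)).mulVecLin) ≤ 1 := by
  set K := LinearMap.ker
    (borderD A a t - μ • (1 : Matrix (Unit ⊕ Fin n) (Unit ⊕ Fin n) ℝ)).mulVecLin
  have hinj : Function.Injective
      ((LinearMap.proj (R := ℝ) (φ := fun _ => ℝ) (Sum.inl ())).comp K.subtype) := by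
    rw [← LinearMap.ker_eq_bot, Submodule.eq_bot_iff]
    rintro ⟨V, hVK⟩ (hV0 : V (Sum.inl ()) = 0)
    obtain ⟨-, hx⟩ := (borderD_mulVec_eq_smul_iff A a t μ V).mp (mem_ker_sub_smul_one_iff.mp hVK)
    rw [hV0, zero_smul, sub_mulVec, smul_mulVec, one_mulVec, sub_eq_zero] at hx
    have hx0 := hμ _ hx
    ext (_ | i)
    · exact hV0
    · exact congrFun hx0 i
  exact (LinearMap.finrank_le_finrank_of_injective hinj).trans (Module.finrank_self ℝ).le

end Border

def borderShift {n : ℕ} (w : Fin n → ℝ) : (Unit ⊕ Fin n → ℝ) ≃ₗ[ℝ] ℝ × (Fin n → ℝ) where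
  toFun V := (V (Sum.inl ()), V ∘ Sum.inr - V (Sum.inl ()) • w)
  invFun p := Sum.elim (fun _ => p.1) (p.2 + p.1 • w)
  map_add' V W := by ext <;> simp [add_smul]; ring
  map_smul' c V := by ext <;> simp [smul_sub, smul_smul]
  left_inv V := by ext (_ | i) <;> simp
  right_inv p := by ext <;> simp

section HardCase

variable {n : ℕ} {A : Matrix (Fin n) (Fin n) ℝ} {a w : Fin n → ℝ}

lemma borderD_sub_lambdaMin_smul_one_mulVec
    (hw : (A - lambdaMin A • (1 : Matrix (Fin n) (Fin n) ℝ)) *ᵥ w = a) (t : ℝ) :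
    (borderD A a t - lambdaMin A • (1 : Matrix (Unit ⊕ Fin n) (Unit ⊕ Fin n) ℝ)) *ᵥ
        Sum.elim (fun _ => 1) w = Sum.elim (fun _ => t - (lambdaMin A + a ⬝ᵥ w)) 0 := by
  rw [sub_mulVec, smul_mulVec, one_mulVec, borderD_mulVec]
  ext (_ | i)
  · simp only [Pi.sub_apply, Sum.elim_inl, Sum.elim_comp_inr, Pi.smul_apply, smul_eq_mul]
    ring
  · have hwi := congrFun hw i
    simp only [sub_mulVec, smul_mulVec, one_mulVec, Pi.sub_apply, Pi.smul_apply,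
      smul_eq_mul] at hwi
    simp [← hwi]

variable (hA : A.IsHermitian) (hw : (A - lambdaMin A • (1 : Matrix (Fin n) (Fin n) ℝ)) *ᵥ w = a)
include hA hw

lemma dotProduct_eq_zero_of_mulVec_eq_lambdaMin_smul {v : Fin n → ℝ}
    (hv : A *ᵥ v = lambdaMin A • v) : a ⬝ᵥ v = 0 := by
  rw [← hw, sub_mulVec, sub_dotProduct, hA.mulVec_dotProduct, hv, smul_mulVec, one_mulVec,
    dotProduct_smul, smul_dotProduct, sub_self]

lemma lambdaMin_borderD_le [Nonempty (Fin n)] (t : ℝ) :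
    lambdaMin (borderD A a t) ≤ lambdaMin A := by
  obtain ⟨v, hv, hAv⟩ := hA.exists_mulVec_eq_lambdaMin_smul
  refine lambdaMin_le_of_mulVec_eq_smul (v := Sum.elim 0 v) ?_ ?_
  · exact fun h => hv (by simpa using congrArg (· ∘ Sum.inr) h)
  · rw [borderD_mulVec_eq_smul_iff, Sum.elim_comp_inr,
      dotProduct_eq_zero_of_mulVec_eq_lambdaMin_smul hA hw hAv]
    simp [sub_mulVec, smul_mulVec, hAv]

lemma lambdaMin_borderD_lt {t : ℝ} (ht : t < lambdaMin A + a ⬝ᵥ w) :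
    lambdaMin (borderD A a t) < lambdaMin A := by
  refine (isHermitian_borderD A a t hA).lambdaMin_lt_of_dotProduct_sub_smul_one_neg
    (x := Sum.elim (fun _ => 1) w) ?_
  rw [borderD_sub_lambdaMin_smul_one_mulVec hw, sumElim_dotProduct_sumElim]
  simpa using ht

lemma lt_of_borderD_mulVec_eq_smul {t μ : ℝ} {V : Unit ⊕ Fin n → ℝ} (hV : V ≠ 0)
    (hDV : borderD A a t *ᵥ V = μ • V) (hμ : μ < lambdaMin A) :
    t < lambdaMin A + a ⬝ᵥ w := by
  obtain ⟨hs, hx⟩ := (borderD_mulVec_eq_smul_iff A a t μ V).mp hDV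
  set s := V (Sum.inl ())
  set x := V ∘ Sum.inr
  have hs0 : s ≠ 0 := by
    intro hs0
    rw [hs0, zero_smul, sub_mulVec, smul_mulVec, one_mulVec, sub_eq_zero] at hx
    have hx0 : x = 0 := by
      by_contra hx0
      exact (lambdaMin_le_of_mulVec_eq_smul hx0 hx).not_gt hμ
    exact hV (by ext (_ | i); exacts [hs0, congrFun hx0 i])
  have hy : (A - lambdaMin A • (1 : Matrix (Fin n) (Fin n) ℝ)) *ᵥ (s⁻¹ • x)
      + (lambdaMin A - μ) • (s⁻¹ • x) = a := by
    rw [sub_mulVec, smul_mulVec, one_mulVec, sub_smul, ← add_sub_assoc, sub_add_cancel,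
      mulVec_smul, smul_comm μ, ← smul_sub]
    rw [sub_mulVec, smul_mulVec, one_mulVec] at hx
    rw [hx, smul_smul, inv_mul_cancel₀ hs0, one_smul]
  have hay : a ⬝ᵥ (s⁻¹ • x) ≤ a ⬝ᵥ w :=
    (hA.posSemidef_sub_smul_one hA.lambdaMin_le_eigenvalues).dotProduct_le_of_mulVec_add_smul_eq
      (sub_nonneg.mpr hμ.le) hy hw
  have ht : t = μ + a ⬝ᵥ (s⁻¹ • x) := by
    rw [dotProduct_smul, smul_eq_mul]
    field_simp
    linarith
  linarith

lemma lambdaMin_borderD_eq [Nonempty (Fin n)] {t : ℝ} (ht : lambdaMin A + a ⬝ᵥ w ≤ t) :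
    lambdaMin (borderD A a t) = lambdaMin A := by
  refine (lambdaMin_borderD_le hA hw t).antisymm (not_lt.mp fun hlt => ?_)
  obtain ⟨V, hV, hDV⟩ := (isHermitian_borderD A a t hA).exists_mulVec_eq_lambdaMin_smul
  exact ht.not_gt (lt_of_borderD_mulVec_eq_smul hA hw hV hDV hlt)

lemma eigMult_borderD_eq_one {t : ℝ} (ht : t < lambdaMin A + a ⬝ᵥ w) :
    eigMult (borderD A a t) = 1 := by
  have hlt := lambdaMin_borderD_lt hA hw ht
  refine (finrank_ker_borderD_sub_smul_one_le_one A a t fun x hx => ?_).antisymm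
    (isHermitian_borderD A a t hA).one_le_eigMult
  by_contra hx0
  exact (lambdaMin_le_of_mulVec_eq_smul hx0 hx).not_gt hlt

lemma mem_ker_borderD_sub_lambdaMin_smul_one_iff {t : ℝ} {V : Unit ⊕ Fin n → ℝ} :
    V ∈ LinearMap.ker (borderD A a t -
        lambdaMin A • (1 : Matrix (Unit ⊕ Fin n) (Unit ⊕ Fin n) ℝ)).mulVecLin ↔
      (t - (lambdaMin A + a ⬝ᵥ w)) * (borderShift w V).1 = 0 ∧
        (borderShift w V).2 ∈ LinearMap.ker
          (A - lambdaMin A • (1 : Matrix (Fin n) (Fin n) ℝ)).mulVecLin := by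
  set K := LinearMap.ker (A - lambdaMin A • (1 : Matrix (Fin n) (Fin n) ℝ)).mulVecLin
  set s := V (Sum.inl ())
  set x := V ∘ Sum.inr
  change _ ↔ (t - (lambdaMin A + a ⬝ᵥ w)) * s = 0 ∧ x - s • w ∈ K
  have hK : (A - lambdaMin A • (1 : Matrix (Fin n) (Fin n) ℝ)) *ᵥ x = s • a ↔ x - s • w ∈ K := by
    rw [LinearMap.mem_ker, mulVecLin_apply, mulVec_sub, mulVec_smul, hw, sub_eq_zero]
  rw [mem_ker_sub_smul_one_iff, borderD_mulVec_eq_smul_iff, hK]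
  refine and_congr_left fun hz => ?_
  have haz := dotProduct_eq_zero_of_mulVec_eq_lambdaMin_smul hA hw (mem_ker_sub_smul_one_iff.mp hz)
  rw [dotProduct_sub, dotProduct_smul, smul_eq_mul, sub_eq_zero] at haz
  rw [haz]
  constructor <;> intro h <;> linarith

lemma ker_borderD_sub_lambdaMin_smul_one_eq_comap {t : ℝ} (p : Submodule ℝ ℝ)
    (hp : ∀ s, s ∈ p ↔ (t - (lambdaMin A + a ⬝ᵥ w)) * s = 0) :
    LinearMap.ker (borderD A a t -
        lambdaMin A • (1 : Matrix (Unit ⊕ Fin n) (Unit ⊕ Fin n) ℝ)).mulVecLin =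
      (p.prod (LinearMap.ker (A - lambdaMin A • (1 : Matrix (Fin n) (Fin n) ℝ)).mulVecLin)).comap
        (borderShift w).toLinearMap := by
  ext V
  rw [mem_ker_borderD_sub_lambdaMin_smul_one_iff hA hw, Submodule.mem_comap,
    Submodule.mem_prod, hp]
  rfl

lemma eigMult_borderD_eq_add_one [Nonempty (Fin n)] :
    eigMult (borderD A a (lambdaMin A + a ⬝ᵥ w)) = eigMult A + 1 := by
  rw [eigMult, eigMult, lambdaMin_borderD_eq hA hw le_rfl,
    ker_borderD_sub_lambdaMin_smul_one_eq_comap hA hw ⊤ (by simp),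
    Submodule.comap_equiv_eq_map_symm, LinearEquiv.finrank_map_eq, Submodule.finrank_prod,
    finrank_top, Module.finrank_self, add_comm]

lemma eigMult_borderD_eq [Nonempty (Fin n)] {t : ℝ} (ht : lambdaMin A + a ⬝ᵥ w < t) :
    eigMult (borderD A a t) = eigMult A := by
  rw [eigMult, eigMult, lambdaMin_borderD_eq hA hw ht.le,
    ker_borderD_sub_lambdaMin_smul_one_eq_comap hA hw ⊥ (by simp [sub_ne_zero.mpr ht.ne']),
    Submodule.comap_equiv_eq_map_symm, LinearEquiv.finrank_map_eq, Submodule.finrank_prod,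
    finrank_bot, zero_add]

end HardCase

end Matrix

/-- `w` is any solution of (A − λmin(A)·I)w = a; then aᵀw = aᵀ(A − λmin(A)·I)†a, so `t0` is the
threshold of the paper. -/
theorem stmt1_general {n : ℕ} (hn : 1 ≤ n) (A : Matrix (Fin n) (Fin n) ℝ) (hA : A.IsHermitian)
    (a : Fin n → ℝ)
    (w : Fin n → ℝ) (hw : (A - lambdaMin A • (1 : Matrix (Fin n) (Fin n) ℝ)).mulVec w = a)
    (t0 : ℝ) (ht0 : t0 = lambdaMin A + a ⬝ᵥ w) :
    (∀ t : ℝ, t < t0 →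
        lambdaMin (borderD A a t) < lambdaMin A ∧ eigMult (borderD A a t) = 1) ∧
    (lambdaMin (borderD A a t0) = lambdaMin A ∧
        eigMult (borderD A a t0) = eigMult A + 1) ∧
    (∀ t : ℝ, t0 < t →
        lambdaMin (borderD A a t) = lambdaMin A ∧ eigMult (borderD A a t) = eigMult A) := by
  have : Nonempty (Fin n) := ⟨⟨0, hn⟩⟩
  subst ht0
  exact ⟨fun t ht => ⟨lambdaMin_borderD_lt hA hw ht, eigMult_borderD_eq_one hA hw ht⟩,
    ⟨lambdaMin_borderD_eq hA hw le_rfl, eigMult_borderD_eq_add_one hA hw⟩,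
    fun t ht => ⟨lambdaMin_borderD_eq hA hw ht.le, eigMult_borderD_eq hA hw ht⟩⟩

/-- Hard case of Theorem 1 (Rendl–Wolkowicz).
Here `w` is any solution of (A − λmin(A)·I)w = a, so that
t0 = λmin(A) + aᵀ(A − λmin(A)·I)†a = λmin(A) + aᵀw (in the hard case aᵀw is
independent of the choice of solution w). -/
theorem stmt1 {n : ℕ} (hn : 1 ≤ n) (A : Matrix (Fin n) (Fin n) ℝ) (hA : A.IsHermitian)
    (a : Fin n → ℝ) (Δ : ℝ) (hΔ : 0 < Δ)
    (hhard : ∀ v : Fin n → ℝ, A.mulVec v = lambdaMin A • v → a ⬝ᵥ v = 0)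
    (w : Fin n → ℝ) (hw : (A - lambdaMin A • (1 : Matrix (Fin n) (Fin n) ℝ)).mulVec w = a)
    (t0 : ℝ) (ht0 : t0 = lambdaMin A + a ⬝ᵥ w) :
    (∀ t : ℝ, t < t0 →
        lambdaMin (borderD A a t) < lambdaMin A ∧ eigMult (borderD A a t) = 1) ∧
    (lambdaMin (borderD A a t0) = lambdaMin A ∧
        eigMult (borderD A a t0) = eigMult A + 1) ∧
    (∀ t : ℝ, t0 < t →
        lambdaMin (borderD A a t) = lambdaMin A ∧ eigMult (borderD A a t) = eigMult A) :=
  stmt1_general hn A hA a w hw t0 ht0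
end
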